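/- (KL-divergence guided temperature sampling, Theorem 3.) Let V be a nonempty finite type, let P and P⁻ be positive pmfs on V (the pretrained next-token distributions with and without the evidence), let h : ℝ≥0 → ℝ≥0 be a monotonically increasing function, and set λ = h(D_KL(P‖P⁻)). Define Z = ∑_{b} P(b)^{λ+1} and π*(a) = P(a)^{λ+1} / Z. Then π* is the unique maximizer over all pmfs π on V of the objective π ↦ −((λ + 1) · D_KL(π‖P) + λ · H(π)). -/
import Mathlib


open scoped NNReal

/-- A probability mass function on a finite type: nonnegative and sums to 1. -/
def IsPmf {V : Type*} [Fintype V] (π : V → ℝ) : Prop :=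
  (∀ a, 0 ≤ π a) ∧ ∑ a, π a = 1

/-- KL divergence `D_KL(π‖P) = ∑ a, π a * log (π a / P a)`.
Terms with `π a = 0` contribute `0`. -/
noncomputable def klDiv {V : Type*} [Fintype V] (π P : V → ℝ) : ℝ :=
  ∑ a, π a * Real.log (π a / P a)

/-- Entropy `H(π) = −∑ a, π a * log (π a)`. Terms with `π a = 0` contribute `0`. -/
noncomputable def entropy {V : Type*} [Fintype V] (π : V → ℝ) : ℝ :=
  -∑ a, π a * Real.log (π a)

/-- Gibbs' inequality (strict form): for a pmf `π` and a positive pmf `q` with `π ≠ q`,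
the quantity `∑ π log(π/q)` is strictly positive. -/
lemma gibbs_strict {V : Type*} [Fintype V] (π q : V → ℝ)
    (hπ : IsPmf π) (hq : ∀ a, 0 < q a) (hqs : ∑ a, q a = 1) (hne : π ≠ q) :
    0 < ∑ a, π a * Real.log (π a / q a) := by
  obtain ⟨hπ0, hπ1⟩ := hπ
  have key : ∀ a : V, π a - q a ≤ π a * Real.log (π a / q a) := by
    intro a
    rcases eq_or_lt_of_le (hπ0 a) with h0 | h0
    · simp [← h0]
      linarith [(hq a).le]
    · have hqa := hq a
      have hlog : Real.log (q a / π a) ≤ q a / π a - 1 :=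
        Real.log_le_sub_one_of_pos (by positivity)
      have hinv : Real.log (π a / q a) = -Real.log (q a / π a) := by
        rw [← Real.log_inv]; congr 1; field_simp
      have h2 : 1 - q a / π a ≤ Real.log (π a / q a) := by rw [hinv]; linarith
      have h3 := mul_le_mul_of_nonneg_left h2 h0.le
      have hsimp : π a * (1 - q a / π a) = π a - q a := by field_simp
      linarith [hsimp ▸ h3]
  obtain ⟨a0, ha0⟩ : ∃ a, π a ≠ q a := by
    by_contra hc
    push_neg at hc
    exact hne (funext hc)
  have strict : π a0 - q a0 < π a0 * Real.log (π a0 / q a0) := by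
    rcases eq_or_lt_of_le (hπ0 a0) with h0 | h0
    · have := hq a0
      simp [← h0]
      linarith
    · have hqa := hq a0
      have hne1 : q a0 / π a0 ≠ 1 := by
        intro hc
        apply ha0
        field_simp at hc
        linarith
      have hlog : Real.log (q a0 / π a0) < q a0 / π a0 - 1 :=
        Real.log_lt_sub_one_of_pos (by positivity) hne1
      have hinv : Real.log (π a0 / q a0) = -Real.log (q a0 / π a0) := by
        rw [← Real.log_inv]; congr 1; field_simp
      have h2 : 1 - q a0 / π a0 < Real.log (π a0 / q a0) := by rw [hinv]; linarith
      have h3 := mul_lt_mul_of_pos_left h2 h0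
      have hsimp : π a0 * (1 - q a0 / π a0) = π a0 - q a0 := by field_simp
      linarith [hsimp ▸ h3]
  have hsum : ∑ a, (π a - q a) < ∑ a, π a * Real.log (π a / q a) :=
    Finset.sum_lt_sum (fun a _ => key a) ⟨a0, Finset.mem_univ a0, strict⟩
  have hzero : ∑ a, (π a - q a) = 0 := by
    rw [Finset.sum_sub_distrib, hπ1, hqs]; ring
  linarith

/-- KL-divergence guided temperature sampling, Theorem 3: with positive
pmfs `P` (evidence-conditioned) and `Pm` (evidence-free), a monotonically increasing
`h : ℝ≥0 → ℝ≥0`, weight `λ = h (D_KL(P‖Pm))`, `Z = ∑ b, P b ^ (λ+1)` and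
`π* a = P a ^ (λ+1) / Z`, the pmf `π*` is the unique maximizer of
`π ↦ −((λ + 1) · D_KL(π‖P) + λ · H(π))` over all pmfs. -/
theorem kl_guided_temperature_sampling_optimal_policy {V : Type*} [Fintype V] [Nonempty V]
    (P : V → ℝ) (hPpos : ∀ a, 0 < P a) (hPsum : ∑ a, P a = 1)
    (Pm : V → ℝ) (hPmpos : ∀ a, 0 < Pm a) (hPmsum : ∑ a, Pm a = 1)
    (h : ℝ≥0 → ℝ≥0) (hmono : Monotone h)
    (lam : ℝ) (hlam : lam = (h (Real.toNNReal (klDiv P Pm)) : ℝ))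
    (Z : ℝ) (hZ : Z = ∑ b, P b ^ (lam + 1))
    (πstar : V → ℝ) (hπstar : ∀ a, πstar a = P a ^ (lam + 1) / Z) :
    IsPmf πstar ∧
    ∀ π : V → ℝ, IsPmf π → π ≠ πstar →
      -((lam + 1) * klDiv π P + lam * entropy π) <
        -((lam + 1) * klDiv πstar P + lam * entropy πstar) := by
  have hZpos : 0 < Z := by
    rw [hZ]
    exact Finset.sum_pos (fun b _ => Real.rpow_pos_of_pos (hPpos b) _) Finset.univ_nonempty
  have hπspos : ∀ a, 0 < πstar a := fun a => by
    rw [hπstar a]; exact div_pos (Real.rpow_pos_of_pos (hPpos a) _) hZpos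
  have hπssum : ∑ a, πstar a = 1 := by
    simp only [hπstar]
    rw [← Finset.sum_div, ← hZ, div_self hZpos.ne']
  have hπsPmf : IsPmf πstar := ⟨fun a => (hπspos a).le, hπssum⟩
  have hobj : ∀ π : V → ℝ, IsPmf π →
      -((lam + 1) * klDiv π P + lam * entropy π) =
        Real.log Z - ∑ a, π a * Real.log (π a / πstar a) := by
    intro π hπ
    obtain ⟨hπ0, hπ1⟩ := hπ
    have key : ∀ a : V, π a * Real.log (π a / πstar a) =
        (lam + 1) * (π a * Real.log (π a / P a)) - lam * (π a * Real.log (π a))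
          + π a * Real.log Z := by
      intro a
      rcases eq_or_lt_of_le (hπ0 a) with h0 | h0
      · simp [← h0]
      · have hPa := hPpos a
        have hπsa := hπspos a
        have hlogs : Real.log (πstar a) = (lam + 1) * Real.log (P a) - Real.log Z := by
          rw [hπstar a, Real.log_div (Real.rpow_pos_of_pos hPa _).ne' hZpos.ne',
            Real.log_rpow hPa]
        rw [Real.log_div h0.ne' hPa.ne', Real.log_div h0.ne' hπsa.ne', hlogs]
        ring
    have hsum : ∑ a, π a * Real.log (π a / πstar a) =
        ∑ a, ((lam + 1) * (π a * Real.log (π a / P a)) - lam * (π a * Real.log (π a))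
          + π a * Real.log Z) := Finset.sum_congr rfl fun a _ => key a
    rw [Finset.sum_add_distrib, Finset.sum_sub_distrib, ← Finset.mul_sum, ← Finset.mul_sum,
      ← Finset.sum_mul, hπ1, one_mul] at hsum
    unfold klDiv entropy
    linarith
  refine ⟨hπsPmf, fun π hπ hne => ?_⟩
  rw [hobj π hπ, hobj πstar hπsPmf]
  have hzero : ∑ a, πstar a * Real.log (πstar a / πstar a) = 0 :=
    Finset.sum_eq_zero fun a _ => by rw [div_self (hπspos a).ne', Real.log_one, mul_zero]
  rw [hzero, sub_zero]
  have := gibbs_strict π πstar hπ hπspos hπssum hne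
  linarith
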